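/- Surrogate-bias bound for a stopped-base, fixed-depth tail surrogate: under the assumptions ‖D_z Φ_x(z)‖ ≤ ρ < 1, ‖D_x Φ_x(z)‖ ≤ L_Φ, ‖D_z A_x(z)‖ ≤ L_A on a forward-invariant neighborhood, with Ψ_x^R(z) = A_x(Φ_x^R(z)) and z_T(x) the T-th base iterate, the difference between the full gradient ∇_x Ψ_x^R(z_T(x)) and the stop-gradient surrogate ∂_x Ψ_x^R(z)|_{z = z_T(x)} equals D_z Ψ_x^R(z_T(x)) ∘ D_x z_T(x), and its norm is at most (L_A L_Φ/(1 − ρ)) · ρ^R. -/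

import Mathlib

/-!
Since `(x, z) ↦ Ψ x z` is jointly differentiable, the chain rule splits
the total derivative of `x ↦ Ψ x (z_T x)` into the partial derivative in `x` plus
`D_z Ψ_x (z_T x) ∘ D z_T x`. The second factor is a composite of `R` contractions followed by
`D_z A`, so its norm is at most `L_A ρ^R`. Differentiating `z_{t+1} x = Φ x (z_t x)` gives
`‖D z_{t+1}‖ ≤ L_Φ + ρ ‖D z_t‖`, and with `z_0` constant this keeps `‖D z_t‖ ≤ L_Φ / (1 - ρ)`.
-/

open ContinuousLinearMap

section Chain

variable {𝕜 X Z W : Type*} [NontriviallyNormedField 𝕜]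
  [NormedAddCommGroup X] [NormedSpace 𝕜 X] [NormedAddCommGroup Z] [NormedSpace 𝕜 Z]
  [NormedAddCommGroup W] [NormedSpace 𝕜 W]

theorem HasFDerivAt.partial_fst {f : X → Z → W} {L₁ : X →L[𝕜] W} {L₂ : Z →L[𝕜] W} {x : X} {z : Z}
    (h : HasFDerivAt (fun p : X × Z => f p.1 p.2) (L₁.comp (fst 𝕜 X Z) + L₂.comp (snd 𝕜 X Z))
      (x, z)) :
    HasFDerivAt (fun x' => f x' z) L₁ x := by
  have hL : (L₁.comp (fst 𝕜 X Z) + L₂.comp (snd 𝕜 X Z)).comp (inl 𝕜 X Z) = L₁ := by ext; simp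
  exact hL ▸ (h.comp x (hasFDerivAt_prodMk_left (𝕜 := 𝕜) x z) :)

theorem HasFDerivAt.partial_snd {f : X → Z → W} {L₁ : X →L[𝕜] W} {L₂ : Z →L[𝕜] W} {x : X} {z : Z}
    (h : HasFDerivAt (fun p : X × Z => f p.1 p.2) (L₁.comp (fst 𝕜 X Z) + L₂.comp (snd 𝕜 X Z))
      (x, z)) :
    HasFDerivAt (f x) L₂ z := by
  have hL : (L₁.comp (fst 𝕜 X Z) + L₂.comp (snd 𝕜 X Z)).comp (inr 𝕜 X Z) = L₂ := by ext; simp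
  exact hL ▸ (h.comp z (hasFDerivAt_prodMk_right (𝕜 := 𝕜) x z) :)

theorem fderiv_comp_prodMk_eq_add {f : X → Z → W} {g : X → Z} {x : X}
    (hf : DifferentiableAt 𝕜 (fun p : X × Z => f p.1 p.2) (x, g x)) (hg : DifferentiableAt 𝕜 g x) :
    fderiv 𝕜 (fun x' => f x' (g x')) x =
      fderiv 𝕜 (fun x' => f x' (g x)) x + (fderiv 𝕜 (f x) (g x)).comp (fderiv 𝕜 g x) := by
  set L := fderiv 𝕜 (fun p : X × Z => f p.1 p.2) (x, g x)
  have h_total : HasFDerivAt (fun x' => f x' (g x'))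
      (L.comp ((ContinuousLinearMap.id 𝕜 X).prod (fderiv 𝕜 g x))) x :=
    (hf.hasFDerivAt.comp x ((hasFDerivAt_id x).prodMk hg.hasFDerivAt) :)
  have h_fst : HasFDerivAt (fun x' => f x' (g x)) (L.comp (inl 𝕜 X Z)) x :=
    (hf.hasFDerivAt.comp x (hasFDerivAt_prodMk_left (𝕜 := 𝕜) x (g x)) :)
  have h_snd : HasFDerivAt (f x) (L.comp (inr 𝕜 X Z)) (g x) :=
    (hf.hasFDerivAt.comp (g x) (hasFDerivAt_prodMk_right (𝕜 := 𝕜) x (g x)) :)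
  rw [h_total.fderiv, h_fst.fderiv, h_snd.fderiv]
  ext v
  simp [← map_add]

theorem norm_fderiv_iterate_le {f : Z → Z} {ρ : ℝ} (hf : Differentiable 𝕜 f)
    (hρ : ∀ z, ‖fderiv 𝕜 f z‖ ≤ ρ) (n : ℕ) (z : Z) : ‖fderiv 𝕜 f^[n] z‖ ≤ ρ ^ n := by
  induction n generalizing z with
  | zero => simpa using norm_id_le
  | succ n ih =>
    rw [Function.iterate_succ, fderiv_comp z ((hf.iterate n) (f z)) (hf z), pow_succ]
    exact (opNorm_comp_le _ _).trans
      (mul_le_mul (ih (f z)) (hρ z) (norm_nonneg _) ((norm_nonneg _).trans (ih (f z))))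

theorem norm_fderiv_comp_iterate_le {g : Z → W} {f : Z → Z} {L ρ : ℝ}
    (hg : Differentiable 𝕜 g) (hf : Differentiable 𝕜 f)
    (hL : ∀ z, ‖fderiv 𝕜 g z‖ ≤ L) (hρ : ∀ z, ‖fderiv 𝕜 f z‖ ≤ ρ) (n : ℕ) (z : Z) :
    ‖fderiv 𝕜 (g ∘ f^[n]) z‖ ≤ L * ρ ^ n := by
  rw [fderiv_comp z (hg _) ((hf.iterate n) z)]
  exact (opNorm_comp_le _ _).trans (mul_le_mul (hL _) (norm_fderiv_iterate_le hf hρ n z)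
    (norm_nonneg _) ((norm_nonneg _).trans (hL z)))

end Chain

theorem le_div_one_sub_of_le_add_mul {a : ℕ → ℝ} {L ρ : ℝ} (hρ0 : 0 ≤ ρ) (hρ1 : ρ < 1)
    (h0 : a 0 ≤ L / (1 - ρ)) (hstep : ∀ t, a (t + 1) ≤ L + ρ * a t) (t : ℕ) :
    a t ≤ L / (1 - ρ) := by
  induction t with
  | zero => exact h0
  | succ t ih =>
    have hfix : L + ρ * (L / (1 - ρ)) = L / (1 - ρ) := by
      field_simp [(sub_pos.mpr hρ1).ne']
      ring
    calc a (t + 1) ≤ L + ρ * a t := hstep t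
      _ ≤ L + ρ * (L / (1 - ρ)) := by gcongr
      _ = L / (1 - ρ) := hfix

section Iteration

variable {𝕜 X Z : Type*} [NontriviallyNormedField 𝕜]
  [NormedAddCommGroup X] [NormedSpace 𝕜 X] [NormedAddCommGroup Z] [NormedSpace 𝕜 Z]
  {Φ : X → Z → Z}

theorem differentiable_iterate_uncurry (hΦ : Differentiable 𝕜 (fun p : X × Z => Φ p.1 p.2))
    (n : ℕ) : Differentiable 𝕜 (fun p : X × Z => (Φ p.1)^[n] p.2) := by
  induction n with
  | zero => exact differentiable_snd
  | succ n ih =>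
    simp_rw [Function.iterate_succ_apply']
    exact hΦ.comp (differentiable_fst.prodMk ih)

variable {zseq : ℕ → X → Z} {z0 : Z}

theorem differentiable_orbit (hΦ : Differentiable 𝕜 (fun p : X × Z => Φ p.1 p.2))
    (hz0 : zseq 0 = fun _ => z0) (hrec : ∀ t x, zseq (t + 1) x = Φ x (zseq t x)) (t : ℕ) :
    Differentiable 𝕜 (zseq t) := by
  induction t with
  | zero => rw [hz0]; exact differentiable_const z0
  | succ t ih =>
    rw [funext (hrec t)]
    exact hΦ.comp (differentiable_id.prodMk ih)

theorem norm_fderiv_orbit_le {DΦx : X → Z → (X →L[𝕜] Z)} {DΦz : X → Z → (Z →L[𝕜] Z)} {ρ L : ℝ}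
    (hΦ : ∀ x z, HasFDerivAt (fun p : X × Z => Φ p.1 p.2)
      ((DΦx x z).comp (fst 𝕜 X Z) + (DΦz x z).comp (snd 𝕜 X Z)) (x, z))
    (hΦz : ∀ x z, ‖DΦz x z‖ ≤ ρ) (hΦx : ∀ x z, ‖DΦx x z‖ ≤ L) (hρ1 : ρ < 1)
    (hz0 : zseq 0 = fun _ => z0) (hrec : ∀ t x, zseq (t + 1) x = Φ x (zseq t x)) (t : ℕ) (x : X) :
    ‖fderiv 𝕜 (zseq t) x‖ ≤ L / (1 - ρ) := by
  have hdiff := differentiable_orbit (fun p => (hΦ p.1 p.2).differentiableAt) hz0 hrec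
  have hρ0 : 0 ≤ ρ := (norm_nonneg _).trans (hΦz x z0)
  refine le_div_one_sub_of_le_add_mul (a := fun t => ‖fderiv 𝕜 (zseq t) x‖) hρ0 hρ1 ?_
    (fun t => ?_) t
  · simp only [hz0, fderiv_fun_const, Pi.zero_apply, norm_zero]
    exact div_nonneg ((norm_nonneg _).trans (hΦx x z0)) (sub_pos.mpr hρ1).le
  · have hstep : fderiv 𝕜 (zseq (t + 1)) x = DΦx x (zseq t x) + (DΦz x (zseq t x)).comp
        (fderiv 𝕜 (zseq t) x) := by
      rw [funext (hrec t), fderiv_comp_prodMk_eq_add (hΦ _ _).differentiableAt (hdiff t x),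
        (hΦ _ _).partial_fst.fderiv, (hΦ _ _).partial_snd.fderiv]
    rw [hstep]
    calc _ ≤ ‖DΦx x (zseq t x)‖ + ‖DΦz x (zseq t x)‖ * ‖fderiv 𝕜 (zseq t) x‖ :=
          (norm_add_le _ _).trans (add_le_add le_rfl (opNorm_comp_le _ _))
      _ ≤ L + ρ * ‖fderiv 𝕜 (zseq t) x‖ :=
          add_le_add (hΦx _ _) (mul_le_mul_of_nonneg_right (hΦz _ _) (norm_nonneg _))

end Iteration

theorem surrogate_bias_bound_general
    {X Z : Type*} [NormedAddCommGroup X] [NormedSpace ℝ X]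
    [NormedAddCommGroup Z] [NormedSpace ℝ Z]
    (Φ A : X → Z → Z)
    (DΦx : X → Z → (X →L[ℝ] Z)) (DΦz : X → Z → (Z →L[ℝ] Z))
    (DAx : X → Z → (X →L[ℝ] Z)) (DAz : X → Z → (Z →L[ℝ] Z))
    (ρ LΦ LA : ℝ) (hρ1 : ρ < 1)
    (hderivΦ : ∀ x z, HasFDerivAt (fun p : X × Z => Φ p.1 p.2)
      ((DΦx x z).comp (ContinuousLinearMap.fst ℝ X Z) +
        (DΦz x z).comp (ContinuousLinearMap.snd ℝ X Z)) (x, z))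
    (hderivA : ∀ x z, HasFDerivAt (fun p : X × Z => A p.1 p.2)
      ((DAx x z).comp (ContinuousLinearMap.fst ℝ X Z) +
        (DAz x z).comp (ContinuousLinearMap.snd ℝ X Z)) (x, z))
    (hΦz : ∀ x z, ‖DΦz x z‖ ≤ ρ) (hΦx : ∀ x z, ‖DΦx x z‖ ≤ LΦ)
    (hAz : ∀ x z, ‖DAz x z‖ ≤ LA)
    (zseq : ℕ → X → Z) (z0 : Z) (hz0 : zseq 0 = fun _ => z0)
    (hrec : ∀ t x, zseq (t + 1) x = Φ x (zseq t x))
    (T R : ℕ) (Ψ : X → Z → Z) (hΨ : ∀ x z, Ψ x z = A x ((Φ x)^[R] z)) :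
    ∀ x : X,
      fderiv ℝ (fun x' => Ψ x' (zseq T x')) x =
        fderiv ℝ (fun x' => Ψ x' (zseq T x)) x +
          (fderiv ℝ (fun z => Ψ x z) (zseq T x)).comp (fderiv ℝ (zseq T) x) ∧
      ‖(fderiv ℝ (fun z => Ψ x z) (zseq T x)).comp (fderiv ℝ (zseq T) x)‖ ≤
        LA * LΦ / (1 - ρ) * ρ ^ R := by
  intro x
  have hΦ : Differentiable ℝ (fun p : X × Z => Φ p.1 p.2) :=
    fun p => (hderivΦ p.1 p.2).differentiableAt
  have hA : Differentiable ℝ (fun p : X × Z => A p.1 p.2) :=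
    fun p => (hderivA p.1 p.2).differentiableAt
  have hΨ_eq : Ψ = fun x z => A x ((Φ x)^[R] z) := funext₂ hΨ
  have hΨ_diff : Differentiable ℝ (fun p : X × Z => Ψ p.1 p.2) := by
    rw [hΨ_eq]
    exact hA.comp (differentiable_fst.prodMk (differentiable_iterate_uncurry hΦ R))
  refine ⟨fderiv_comp_prodMk_eq_add (hΨ_diff _) (differentiable_orbit hΦ hz0 hrec T x), ?_⟩
  have hDΨ : ‖fderiv ℝ (Ψ x) (zseq T x)‖ ≤ LA * ρ ^ R := by
    rw [hΨ_eq]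
    exact norm_fderiv_comp_iterate_le (fun z => (hderivA x z).partial_snd.differentiableAt)
      (fun z => (hderivΦ x z).partial_snd.differentiableAt)
      (fun z => (hderivA x z).partial_snd.fderiv ▸ hAz x z)
      (fun z => (hderivΦ x z).partial_snd.fderiv ▸ hΦz x z) R _
  have hDz := norm_fderiv_orbit_le hderivΦ hΦz hΦx hρ1 hz0 hrec T x
  calc _ ≤ ‖fderiv ℝ (Ψ x) (zseq T x)‖ * ‖fderiv ℝ (zseq T) x‖ := opNorm_comp_le _ _
    _ ≤ LA * ρ ^ R * (LΦ / (1 - ρ)) :=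
        mul_le_mul hDΨ hDz (norm_nonneg _) ((norm_nonneg _).trans hDΨ)
    _ = LA * LΦ / (1 - ρ) * ρ ^ R := by ring

/-- Surrogate-bias bound for a stopped-base, fixed-depth tail surrogate:
the full gradient of `x ↦ Ψ_x^R(z_T(x))` minus the stop-gradient partial
equals `D_zΨ_x^R(z_T(x)) ∘ D_x z_T(x)`, whose norm is at most
`L_A L_Φ ρ^R/(1−ρ)`. -/
theorem surrogate_bias_bound
    {X Z : Type*} [NormedAddCommGroup X] [NormedSpace ℝ X]
    [NormedAddCommGroup Z] [NormedSpace ℝ Z]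
    (Φ A : X → Z → Z)
    (DΦx : X → Z → (X →L[ℝ] Z)) (DΦz : X → Z → (Z →L[ℝ] Z))
    (DAx : X → Z → (X →L[ℝ] Z)) (DAz : X → Z → (Z →L[ℝ] Z))
    (ρ LΦ LA : ℝ) (hρ0 : 0 ≤ ρ) (hρ1 : ρ < 1) (hL : 0 < LΦ) (hLA : 0 < LA)
    (hderivΦ : ∀ x z, HasFDerivAt (fun p : X × Z => Φ p.1 p.2)
      ((DΦx x z).comp (ContinuousLinearMap.fst ℝ X Z) +
        (DΦz x z).comp (ContinuousLinearMap.snd ℝ X Z)) (x, z))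
    (hderivA : ∀ x z, HasFDerivAt (fun p : X × Z => A p.1 p.2)
      ((DAx x z).comp (ContinuousLinearMap.fst ℝ X Z) +
        (DAz x z).comp (ContinuousLinearMap.snd ℝ X Z)) (x, z))
    (hΦz : ∀ x z, ‖DΦz x z‖ ≤ ρ) (hΦx : ∀ x z, ‖DΦx x z‖ ≤ LΦ)
    (hAz : ∀ x z, ‖DAz x z‖ ≤ LA)
    (zseq : ℕ → X → Z) (z0 : Z) (hz0 : zseq 0 = fun _ => z0)
    (hrec : ∀ t x, zseq (t + 1) x = Φ x (zseq t x))
    (T R : ℕ) (Ψ : X → Z → Z) (hΨ : ∀ x z, Ψ x z = A x ((Φ x)^[R] z)) :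
    ∀ x : X,
      fderiv ℝ (fun x' => Ψ x' (zseq T x')) x =
        fderiv ℝ (fun x' => Ψ x' (zseq T x)) x +
          (fderiv ℝ (fun z => Ψ x z) (zseq T x)).comp (fderiv ℝ (zseq T) x) ∧
      ‖(fderiv ℝ (fun z => Ψ x z) (zseq T x)).comp (fderiv ℝ (zseq T) x)‖ ≤
        LA * LΦ / (1 - ρ) * ρ ^ R :=
  surrogate_bias_bound_general Φ A DΦx DΦz DAx DAz ρ LΦ LA hρ1 hderivΦ hderivA hΦz hΦx hAz zseq z0
    hz0 hrec T R Ψ hΨ
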